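/- arXiv:math/9709205 — 2 statements merged into one kernel-verified Lean document; each statement's English description precedes it below -/
import Mathlib

section
/- Let δ be a limit ordinal, e ⊆ δ, and E a set of ordinals, and define gl(e, E) = {sup(α ∩ E) : α ∈ e and α > min(E)}. (a) If e is a club of δ and E ∩ δ is a club of δ, then gl(e, E) is a club of δ with otp(gl(e, E)) ≤ otp(e). (b) If e is closed in δ (not necessarily unbounded) and E ∩ δ is a club of δ, then gl(e, E) is closed in δ and otp(gl(e, E)) ≤ otp(e). -/
/-!
Write `g α = sup (E ∩ α)`. Then `g` is monotone, `g α ≤ α`, and `g` commutes with suprema of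
bounded sets, since `E ∩ sup A` is the union of the `E ∩ α` for `α ∈ A`. Choosing for every point
of `gl(e, E) = g[e ∩ (min E, δ)]` a preimage in `e` gives a strictly increasing map into `e`, which
bounds the order type. For closedness, a supremum of points of `gl(e, E)` is `g` of the supremum
of their preimages; this lies in `e` because an element of `E` above the given supremum (and below
`δ`, which is a limit) also bounds all the preimages.
-/

noncomputable section

/-- The order type of a set of ordinals (meaningful when `C` is small, i.e. bounded). -/
noncomputable def otp (C : Set Ordinal.{0}) : Ordinal.{0} := by
  classical
  exact if h : Small.{0} C then
    letI := h
    haveI : IsWellOrder (Shrink C)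
        (fun x y => ((equivShrink C).symm x : Ordinal) < ((equivShrink C).symm y : Ordinal)) :=
      RelEmbedding.isWellOrder
        (⟨⟨fun x => ((equivShrink C).symm x : Ordinal),
            fun a b hab => (equivShrink C).symm.injective (Subtype.coe_injective hab)⟩,
          Iff.rfl⟩ :
          (fun x y : Shrink C =>
              ((equivShrink C).symm x : Ordinal) < ((equivShrink C).symm y : Ordinal)) ↪r
            ((· < ·) : Ordinal → Ordinal → Prop))
    Ordinal.type
      (fun x y : Shrink C =>
        ((equivShrink C).symm x : Ordinal) < ((equivShrink C).symm y : Ordinal))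
  else 0

/-- `C` is closed in `δ`: any supremum of a nonempty subset of `C` that is `< δ` lies in `C`. -/
def IsClosedIn (C : Set Ordinal.{0}) (δ : Ordinal.{0}) : Prop :=
  ∀ s ⊆ C, s.Nonempty → sSup s < δ → sSup s ∈ C

/-- `C` is a club (closed unbounded) subset of `δ`. -/
def IsClubIn (C : Set Ordinal.{0}) (δ : Ordinal.{0}) : Prop :=
  C ⊆ Set.Iio δ ∧ (∀ β < δ, ∃ γ ∈ C, β ≤ γ) ∧ IsClosedIn C δ

/-- `S` is stationary in `δ`: it meets every club of `δ`. -/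
def IsStationaryIn (S : Set Ordinal.{0}) (δ : Ordinal.{0}) : Prop :=
  ∀ C, IsClubIn C δ → (S ∩ C).Nonempty

/-- The accumulation points of `C` that belong to `C`. -/
def accSet (C : Set Ordinal.{0}) : Set Ordinal.{0} :=
  {β ∈ C | β = sSup (C ∩ Set.Iio β)}

/-- The non-accumulation points of `C`. -/
def naccSet (C : Set Ordinal.{0}) : Set Ordinal.{0} := C \ accSet C

/-- `S_κ^δ`: the set of ordinals below `δ` of cofinality `κ`. -/
def cofSet (κ : Cardinal.{0}) (δ : Ordinal.{0}) : Set Ordinal.{0} :=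
  {α | α < δ ∧ α.cof = κ}

/-- The `gl` operation of Shelah: `gl(e,E) = {sup(α ∩ E) : α ∈ e, α > min E}`. -/
def gl (e E : Set Ordinal.{0}) : Set Ordinal.{0} :=
  {x | ∃ α ∈ e, sInf E < α ∧ x = sSup (E ∩ Set.Iio α)}

theorem lift_otp (C : Set Ordinal.{0}) [Small.{0} C] :
    Ordinal.lift.{1} (otp C) = Ordinal.type ((· < ·) : C → C → Prop) := by
  rw [otp, dif_pos ‹_›]
  -- abstracts the well-order instance built inside `otp`, which instance search cannot rebuild
  generalize_proofs
  rw [← Ordinal.lift_uzero (Ordinal.type ((· < ·) : C → C → Prop)), Ordinal.lift_type_eq]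
  exact ⟨⟨(equivShrink C).symm, Iff.rfl⟩⟩

theorem otp_le_otp_of_strictMono {C D : Set Ordinal.{0}} [Small.{0} D] (f : C → D)
    (hf : StrictMono f) : otp C ≤ otp D := by
  have : Small.{0} C := small_of_injective hf.injective
  rw [← Ordinal.lift_le.{1}, lift_otp, lift_otp]
  exact (OrderEmbedding.ofStrictMono f hf).ltEmbedding.ordinal_type_le

theorem exists_lt_of_unbounded {C : Set Ordinal} {δ β : Ordinal} (hδ : Order.IsSuccLimit δ)
    (hC : ∀ β < δ, ∃ γ ∈ C, β ≤ γ) (hβ : β < δ) : ∃ γ ∈ C, β < γ := by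
  obtain ⟨γ, hγ, hle⟩ := hC _ (hδ.succ_lt hβ)
  exact ⟨γ, hγ, (Order.lt_succ β).trans_le hle⟩

section sSupInterIio

variable {E : Set Ordinal}

theorem sSup_inter_Iio_le (α : Ordinal) : sSup (E ∩ Set.Iio α) ≤ α :=
  csSup_le' fun _ hx => hx.2.le

theorem le_sSup_inter_Iio {ε α : Ordinal} (hε : ε ∈ E) (hεα : ε < α) :
    ε ≤ sSup (E ∩ Set.Iio α) :=
  le_csSup ⟨α, fun _ hx => hx.2.le⟩ ⟨hε, hεα⟩

theorem monotone_sSup_inter_Iio : Monotone fun α => sSup (E ∩ Set.Iio α) := fun _ b hab =>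
  csSup_le_csSup' ⟨b, fun _ hx => hx.2.le⟩ fun _ hx => ⟨hx.1, hx.2.trans_le hab⟩

theorem sSup_inter_Iio_sSup {A : Set Ordinal} (hA : BddAbove A) :
    sSup (E ∩ Set.Iio (sSup A)) = sSup ((fun α => sSup (E ∩ Set.Iio α)) '' A) := by
  have hbdd : BddAbove ((fun α => sSup (E ∩ Set.Iio α)) '' A) :=
    ⟨sSup A, by
      rintro _ ⟨α, hα, rfl⟩
      exact (sSup_inter_Iio_le α).trans (le_csSup hA hα)⟩
  refine le_antisymm (csSup_le' fun ζ ⟨hζE, hζA⟩ => ?_) (csSup_le' ?_)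
  · obtain ⟨α, hα, hζα⟩ := (lt_csSup_iff' hA).1 hζA
    exact (le_sSup_inter_Iio hζE hζα).trans (le_csSup hbdd ⟨α, hα, rfl⟩)
  · rintro _ ⟨α, hα, rfl⟩
    exact monotone_sSup_inter_Iio (le_csSup hA hα)

end sSupInterIio

theorem gl_subset_Iio {e E : Set Ordinal} {δ : Ordinal} (he : e ⊆ Set.Iio δ) :
    gl e E ⊆ Set.Iio δ := by
  rintro _ ⟨α, hα, -, rfl⟩
  exact (sSup_inter_Iio_le α).trans_lt (he hα)

theorem IsClosedIn.gl {e E : Set Ordinal} {δ : Ordinal} (hδ : Order.IsSuccLimit δ)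
    (he : e ⊆ Set.Iio δ) (hec : IsClosedIn e δ) (hE : ∀ β < δ, ∃ γ ∈ E ∩ Set.Iio δ, β ≤ γ) :
    IsClosedIn (gl e E) δ := by
  intro s hs ⟨x₀, hx₀⟩ hsδ
  choose! w hwe hwE hw using fun x (hx : x ∈ s) => hs hx
  obtain ⟨ε, ⟨hεE, hεδ⟩, hsε⟩ := exists_lt_of_unbounded hδ hE hsδ
  have hsbdd : BddAbove s := ⟨δ, fun x hx => (gl_subset_Iio he (hs hx)).le⟩
  have hwε : ∀ x ∈ s, w x ≤ ε := fun x hx => not_lt.1 fun hεw =>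
    ((le_sSup_inter_Iio hεE hεw).trans ((hw x hx).ge.trans (le_csSup hsbdd hx))).not_gt hsε
  have hWbdd : BddAbove (w '' s) := ⟨ε, Set.forall_mem_image.2 hwε⟩
  have hWδ : sSup (w '' s) < δ := (csSup_le' (Set.forall_mem_image.2 hwε)).trans_lt hεδ
  refine ⟨sSup (w '' s), hec _ (Set.image_subset_iff.2 hwe) (Set.Nonempty.image w ⟨x₀, hx₀⟩) hWδ,
    (hwE x₀ hx₀).trans_le (le_csSup hWbdd ⟨x₀, hx₀, rfl⟩), ?_⟩
  rw [sSup_inter_Iio_sSup hWbdd, Set.image_image]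
  exact congrArg sSup ((Set.image_id s).symm.trans (Set.image_congr hw))

theorem IsClubIn.gl {e E : Set Ordinal} {δ : Ordinal} (hδ : Order.IsSuccLimit δ)
    (he : IsClubIn e δ) (hE : IsClubIn (E ∩ Set.Iio δ) δ) : IsClubIn (gl e E) δ := by
  refine ⟨gl_subset_Iio he.1, fun β hβ => ?_, he.2.2.gl hδ he.1 hE.2.1⟩
  obtain ⟨ε, ⟨hεE, hεδ⟩, hβε⟩ := hE.2.1 β hβ
  obtain ⟨α, hαe, hεα⟩ := exists_lt_of_unbounded hδ he.2.1 hεδ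
  exact ⟨_, ⟨α, hαe, (csInf_le' hεE).trans_lt hεα, rfl⟩, hβε.trans (le_sSup_inter_Iio hεE hεα)⟩

theorem otp_gl_le (e E : Set Ordinal) [Small.{0} e] : otp (gl e E) ≤ otp e := by
  choose φ hφe _ hφ using fun x : gl e E => x.2
  refine otp_le_otp_of_strictMono (fun x => ⟨φ x, hφe x⟩) fun x y hxy => lt_of_not_ge fun h => ?_
  have hyx : (y : Ordinal) ≤ x := by
    rw [hφ x, hφ y]
    exact monotone_sSup_inter_Iio h
  exact hxy.not_ge hyx

/-- Observation 0.9: `gl(e,E)` of a club is a club of no larger order type;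
if `e` is merely closed, `gl(e,E)` is closed of no larger order type. -/
theorem stmt_12 (δ : Ordinal) (hδ : Order.IsSuccLimit δ) (e E : Set Ordinal) (he : e ⊆ Set.Iio δ) :
    (IsClubIn e δ → IsClubIn (E ∩ Set.Iio δ) δ →
      IsClubIn (gl e E) δ ∧ otp (gl e E) ≤ otp e) ∧
    (IsClosedIn e δ → IsClubIn (E ∩ Set.Iio δ) δ →
      IsClosedIn (gl e E) δ ∧ otp (gl e E) ≤ otp e) := by
  have : Small.{0} e := small_subset he
  exact ⟨fun hec hE => ⟨hec.gl hδ hE, otp_gl_le e E⟩,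
    fun hec hE => ⟨hec.gl hδ he hE.2.1, otp_gl_le e E⟩⟩
end
end

section
/- Let λ be a regular uncountable cardinal and ⟨c_α : α < λ⁺⟩ a sequence such that for each limit ordinal α < λ⁺, c_α is a club of α with otp(c_α) ≤ λ, and c_{γ+1} = {γ} for each γ. For each limit ordinal δ < λ⁺ define C_δ^0 = c_δ and C_δ^{n+1} = C_δ^n ∪ {α : there exists β ∈ nacc(C_δ^n) with sup(β ∩ C_δ^n) < α < β and α ∈ c_β}. Suppose A ⊆ S_λ^{λ⁺} and α < λ⁺ is a limit ordinal of uncountable cofinality such that A ∩ α is unbounded in α. Then there exists n < ω such that A ∩ nacc(C_α^n) is unbounded in α. -/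
noncomputable section

/-!
Fix `γ ∈ A` below `α`. As `cf γ = λ` and each ladder `c e` has order type at most `λ`, the part
of `c e` below `γ` is bounded below `γ` whenever `c e` reaches `γ`. As long as `C_α^n ∩ γ` is bounded
below `γ`, the least point `e` of `C_α^n` above `γ` is a non-accumulation point of `C_α^n`: either
`e = γ` and we are done, or the gap below `e` contains a point of `c e` in `[γ, e)`. Passing to
`C_α^(n+1)` keeps `C ∩ γ` bounded below `γ` and strictly lowers the least point above `γ`, so the
descent ends, with `γ ∈ nacc(C_α^n)` for some `n`. Since `cf α > ℵ₀`, a single `n` serves for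
cofinally many `γ ∈ A`.
-/

open Set Ordinal Cardinal

theorem lift_otp_s15 {S : Set Ordinal.{0}} (hS : BddAbove S) :
    Ordinal.lift.{1} (otp S) = typeLT S := by
  have := Ordinal.bddAbove_iff_small.mp hS
  let f : (fun x y : Shrink S => ((equivShrink S).symm x : Ordinal) < (equivShrink S).symm y) ≃r
      ((· < ·) : S → S → Prop) := ⟨(equivShrink S).symm, Iff.rfl⟩
  have := f.toRelEmbedding.isWellOrder
  rw [otp, dif_pos ‹_›]
  exact f.ordinal_lift_type_eq.trans (lift_id' _)

theorem mk_inter_Iio_lt_of_otp_le {D : Set Ordinal.{0}} (hD : BddAbove D) {κ : Cardinal.{0}}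
    (hκ : otp D ≤ κ.ord) {γ δ : Ordinal} (hδ : δ ∈ D) (hγδ : γ ≤ δ) :
    #(D ∩ Iio γ : Set Ordinal) < Cardinal.lift.{1} κ := by
  have hinj : #(D ∩ Iio γ : Set Ordinal) ≤ #(Iio (⟨δ, hδ⟩ : D)) :=
    Cardinal.mk_le_of_injective (f := fun x => ⟨⟨x, x.2.1⟩, x.2.2.trans_le hγδ⟩)
      fun x y h => Subtype.ext (congrArg (fun z : Iio (⟨δ, hδ⟩ : D) => (z : Ordinal)) h)
  refine hinj.trans_lt ((Cardinal.lt_ord (o := typeLT (Iio (⟨δ, hδ⟩ : D)))).mp ?_)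
  calc typeLT (Iio (⟨δ, hδ⟩ : D)) = typein (α := D) LT.lt ⟨δ, hδ⟩ := type_Iio_lt _
    _ < typeLT D := typein_lt_type _ _
    _ = Ordinal.lift.{1} (otp D) := (lift_otp_s15 hD).symm
    _ ≤ (Cardinal.lift.{1} κ).ord := by rw [← lift_ord]; exact lift_le.mpr hκ

theorem sSup_inter_Iio_lt_of_otp_le {D : Set Ordinal.{0}} (hD : BddAbove D) {κ : Cardinal.{0}}
    (hκ : otp D ≤ κ.ord) {γ δ : Ordinal} (hγ : γ.cof = κ) (hδ : δ ∈ D) (hγδ : γ ≤ δ) :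
    sSup (D ∩ Iio γ) < γ :=
  sSup_lt_of_lt_cof (by rw [← lift_cof, hγ]; exact mk_inter_Iio_lt_of_otp_le hD hκ hδ hγδ)
    fun _ hx => hx.2

def fillGaps (c : Ordinal → Set Ordinal) (D : Set Ordinal) : Set Ordinal :=
  D ∪ {α | ∃ β ∈ naccSet D, sSup (D ∩ Iio β) < α ∧ α < β ∧ α ∈ c β}

section FillGaps

variable {c : Ordinal → Set Ordinal} {D : Set Ordinal} {γ e δ : Ordinal}

theorem fillGaps_subset_Iio {α : Ordinal} (hD : D ⊆ Iio α) : fillGaps c D ⊆ Iio α := by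
  rintro x (hx | ⟨β, hβ, -, hxβ, -⟩)
  · exact hD hx
  · exact hxβ.trans (hD hβ.1)

theorem mem_naccSet_of_sSup_inter_Iio_lt (hγ : γ ∈ D) (h : sSup (D ∩ Iio γ) < γ) :
    γ ∈ naccSet D :=
  ⟨hγ, fun hacc => h.ne hacc.2.symm⟩

theorem sSup_inter_Iio_le_of_isLeast (he : IsLeast {x | x ∈ D ∧ γ ≤ x} e) :
    sSup (D ∩ Iio e) ≤ sSup (D ∩ Iio γ) :=
  csSup_le_csSup' (bddAbove_Iio.mono inter_subset_right) fun _ hx =>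
    ⟨hx.1, lt_of_not_ge fun hγx => (he.2 ⟨hx.1, hγx⟩).not_gt hx.2⟩

theorem mem_fillGaps_of_isLeast (hγ : sSup (D ∩ Iio γ) < γ) (he : IsLeast {x | x ∈ D ∧ γ ≤ x} e)
    (hδ : δ ∈ c e) (hγδ : γ ≤ δ) (hδe : δ < e) : δ ∈ fillGaps c D := by
  have hsup : sSup (D ∩ Iio e) < γ := (sSup_inter_Iio_le_of_isLeast he).trans_lt hγ
  exact Or.inr ⟨e, mem_naccSet_of_sSup_inter_Iio_lt he.1.1 (hsup.trans_le (hγδ.trans hδe.le)),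
    hsup.trans_le hγδ, hδe, hδ⟩

theorem sSup_fillGaps_inter_Iio_lt (hγ : sSup (D ∩ Iio γ) < γ)
    (he : IsLeast {x | x ∈ D ∧ γ ≤ x} e) (hce : sSup (c e ∩ Iio γ) < γ) :
    sSup (fillGaps c D ∩ Iio γ) < γ := by
  have hD : BddAbove (D ∩ Iio γ) := bddAbove_Iio.mono inter_subset_right
  refine (csSup_le' ?_).trans_lt (max_lt hγ hce)
  rintro x ⟨hx | ⟨β, hβ, hβx, hxβ, hxc⟩, hxγ⟩
  · exact le_max_of_le_left (le_csSup hD ⟨hx, hxγ⟩)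
  rcases lt_or_ge β γ with hβγ | hγβ
  · exact le_max_of_le_left (hxβ.le.trans (le_csSup hD ⟨hβ.1, hβγ⟩))
  -- if `e < β`, then `e` lies below the gap of `β`, which contains `x < γ ≤ e`
  obtain rfl : β = e := by
    refine le_antisymm (le_of_not_gt fun heβ => ?_) (he.2 ⟨hβ.1, hγβ⟩)
    have : e ≤ sSup (D ∩ Iio β) := le_csSup (bddAbove_Iio.mono inter_subset_right) ⟨he.1.1, heβ⟩
    exact (this.trans_lt (hβx.trans hxγ)).not_ge he.1.2
  exact le_max_of_le_right (le_csSup (bddAbove_Iio.mono inter_subset_right) ⟨hxc, hxγ⟩)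

end FillGaps

theorem exists_mem_naccSet_of_sSup_inter_Iio_lt {c : Ordinal → Set Ordinal} {C : ℕ → Set Ordinal}
    (hC : ∀ n, C (n + 1) = fillGaps c (C n)) {α γ : Ordinal} (hCα : C 0 ⊆ Iio α)
    (hc : ∀ e < α, γ < e → ∃ δ ∈ c e, γ ≤ δ ∧ δ < e ∧ sSup (c e ∩ Iio γ) < γ)
    (hγ : sSup (C 0 ∩ Iio γ) < γ) {x : Ordinal} (hx : x ∈ C 0) (hγx : γ ≤ x) :
    ∃ n, γ ∈ naccSet (C n) := by
  have hCα' : ∀ n, C n ⊆ Iio α := Nat.rec hCα fun n ih => hC n ▸ fillGaps_subset_Iio ih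
  suffices ∀ x n, x ∈ C n → γ ≤ x → sSup (C n ∩ Iio γ) < γ → ∃ m, γ ∈ naccSet (C m) from
    this x 0 hx hγx hγ
  intro y
  induction y using WellFoundedLT.induction with | _ y ih => ?_
  intro n hy hγy hγ
  obtain ⟨e, he⟩ : ∃ e, IsLeast {z | z ∈ C n ∧ γ ≤ z} e := ⟨_, isLeast_csInf ⟨y, hy, hγy⟩⟩
  rcases he.1.2.eq_or_lt with rfl | hγe
  · exact ⟨n, mem_naccSet_of_sSup_inter_Iio_lt he.1.1 hγ⟩
  obtain ⟨δ, hδ, hγδ, hδe, hce⟩ := hc e (hCα' n he.1.1) hγe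
  refine ih δ (hδe.trans_le (he.2 ⟨hy, hγy⟩)) (n + 1) ?_ hγδ ?_
  · exact hC n ▸ mem_fillGaps_of_isLeast hγ he hδ hγδ hδe
  · exact hC n ▸ sSup_fillGaps_inter_Iio_lt hγ he hce

theorem exists_mem_ge_of_cof_eq {lam : Cardinal.{0}} {c : Ordinal → Set Ordinal}
    (hc : ∀ α < (Order.succ lam).ord, Order.IsSuccLimit α →
      IsClubIn (c α) α ∧ otp (c α) ≤ lam.ord)
    (hcsucc : ∀ γ : Ordinal, c (γ + 1) = {γ}) {γ e : Ordinal} (hγ : γ.cof = lam) (hγ0 : 0 < γ)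
    (hγe : γ < e) (he : e < (Order.succ lam).ord) :
    ∃ δ ∈ c e, γ ≤ δ ∧ δ < e ∧ sSup (c e ∩ Iio γ) < γ := by
  rcases Ordinal.zero_or_succ_or_isSuccLimit e with rfl | ⟨η, rfl⟩ | he_lim
  · exact (not_lt_zero hγe).elim
  · have hγη : γ ≤ η := Order.lt_succ_iff.mp hγe
    rw [Order.succ_eq_add_one, hcsucc]
    refine ⟨η, rfl, hγη, lt_add_one η, ?_⟩
    rwa [singleton_inter_eq_empty (s := Iio γ) |>.mpr hγη.not_gt, csSup_empty]
  · obtain ⟨⟨hce, hunb, -⟩, hotp⟩ := hc e he he_lim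
    obtain ⟨δ, hδ, hγδ⟩ := hunb γ hγe
    exact ⟨δ, hδ, hγδ, hce hδ, sSup_inter_Iio_lt_of_otp_le (bddAbove_Iio.mono hce) hotp hγ hδ hγδ⟩

theorem exists_unbounded_inter_of_aleph0_lt_cof {α : Ordinal.{0}} (hα : ℵ₀ < α.cof)
    {A : Set Ordinal} {B : ℕ → Set Ordinal} (hA : ∀ β < α, ∃ γ ∈ A, β ≤ γ ∧ γ < α)
    (hB : ∀ γ ∈ A, γ < α → ∃ n, γ ∈ B n) :
    ∃ n, ∀ β < α, ∃ γ ∈ A ∩ B n, β ≤ γ ∧ γ < α := by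
  by_contra! h
  choose β hβα hβ using h
  obtain ⟨γ, hγA, hγβ, hγα⟩ := hA _ (iSup_lt_of_lt_cof (by rwa [Cardinal.mk_nat]) hβα)
  obtain ⟨n, hn⟩ := hB γ hγA hγα
  exact (hβ n γ ⟨hγA, hn⟩ ((Ordinal.le_iSup β n).trans hγβ)).not_gt hγα

theorem stmt_15_general
    (lam : Cardinal.{0})
    (c : Ordinal → Set Ordinal)
    (hc : ∀ α < (Order.succ lam).ord, Order.IsSuccLimit α →
      IsClubIn (c α) α ∧ otp (c α) ≤ lam.ord)
    (hcsucc : ∀ γ : Ordinal, c (γ + 1) = {γ})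
    (C : Ordinal → ℕ → Set Ordinal)
    (hC0 : ∀ δ, C δ 0 = c δ)
    (hCsucc : ∀ δ n, C δ (n + 1) = C δ n ∪
      {α | ∃ β ∈ naccSet (C δ n), sSup (C δ n ∩ Set.Iio β) < α ∧ α < β ∧ α ∈ c β})
    (A : Set Ordinal) (hA : A ⊆ cofSet lam (Order.succ lam).ord)
    (α : Ordinal) (hα : α < (Order.succ lam).ord) (hαlim : Order.IsSuccLimit α)
    (hαcof : Cardinal.aleph0 < α.cof)
    (hunb : ∀ β < α, ∃ γ ∈ A, β ≤ γ ∧ γ < α) :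
    ∃ n : ℕ, ∀ β < α, ∃ γ ∈ A ∩ naccSet (C α n), β ≤ γ ∧ γ < α := by
  obtain ⟨⟨hcα, hcα_unb, -⟩, hcα_otp⟩ := hc α hα hαlim
  refine exists_unbounded_inter_of_aleph0_lt_cof hαcof hunb fun γ hγA hγα => ?_
  have hγ : γ.cof = lam := (hA hγA).2
  obtain ⟨x, hx, hγx⟩ := hcα_unb γ hγα
  have h0 : sSup (c α ∩ Iio γ) < γ :=
    sSup_inter_Iio_lt_of_otp_le (bddAbove_Iio.mono hcα) hcα_otp hγ hx hγx
  exact exists_mem_naccSet_of_sSup_inter_Iio_lt (hCsucc α) (hC0 α ▸ hcα)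
    (fun e he hγe => exists_mem_ge_of_cof_eq hc hcsucc hγ (h0.trans_le' zero_le) hγe
      (he.trans hα)) (hC0 α ▸ h0) (hC0 α ▸ hx) hγx

/-- If A ⊆ S_λ^{λ⁺} is unbounded in α (of uncountable cofinality), then A ∩ nacc(C_α^n) is unbounded in α for some n. -/
theorem stmt_15
    (lam : Cardinal.{0}) (hlamreg : lam.IsRegular) (hlamunc : Cardinal.aleph0 < lam)
    (c : Ordinal → Set Ordinal)
    (hc : ∀ α < (Order.succ lam).ord, Order.IsSuccLimit α →
      IsClubIn (c α) α ∧ otp (c α) ≤ lam.ord)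
    (hcsucc : ∀ γ : Ordinal, c (γ + 1) = {γ})
    (C : Ordinal → ℕ → Set Ordinal)
    (hC0 : ∀ δ, C δ 0 = c δ)
    (hCsucc : ∀ δ n, C δ (n + 1) = C δ n ∪
      {α | ∃ β ∈ naccSet (C δ n), sSup (C δ n ∩ Set.Iio β) < α ∧ α < β ∧ α ∈ c β})
    (A : Set Ordinal) (hA : A ⊆ cofSet lam (Order.succ lam).ord)
    (α : Ordinal) (hα : α < (Order.succ lam).ord) (hαlim : Order.IsSuccLimit α)
    (hαcof : Cardinal.aleph0 < α.cof)
    (hunb : ∀ β < α, ∃ γ ∈ A, β ≤ γ ∧ γ < α) :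
    ∃ n : ℕ, ∀ β < α, ∃ γ ∈ A ∩ naccSet (C α n), β ≤ γ ∧ γ < α :=
  stmt_15_general lam c hc hcsucc C hC0 hCsucc A hA α hα hαlim hαcof hunb
end
end
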